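/- arXiv:1009.5281 — 2 statements merged into one kernel-verified Lean document; each statement's English description precedes it below -/
import Mathlib

section
/- Let r ≥ 1 and let f be an r-even arithmetic function. Then its discrete Fourier transform f̂ is again r-even, and for every n ≥ 1, f̂(n) = Σ_{d|r} f(d) c_{r/d}(n). -/
open Finset

/-- The discrete Fourier transform of an `r`-periodic arithmetic function:
`f̂(n) = Σ_{k=1}^{r} f(k) exp(−2πikn/r)`. -/
noncomputable def dft (r : ℕ) (f : ℕ → ℂ) (n : ℕ) : ℂ :=
  ∑ k ∈ Finset.Icc 1 r, f k * Complex.exp (-(2 * (Real.pi : ℂ) * Complex.I * (k : ℂ) * (n : ℂ) / (r : ℂ)))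

/-- The Ramanujan sum `c_q(n) = Σ_{1≤k≤q, gcd(k,q)=1} exp(2πikn/q)`. -/
noncomputable def ram (q n : ℕ) : ℂ :=
  ∑ k ∈ (Finset.Icc 1 q).filter (fun k => Nat.gcd k q = 1),
    Complex.exp (2 * (Real.pi : ℂ) * Complex.I * (k : ℂ) * (n : ℂ) / (q : ℂ))

/-- `f` is `r`-even: `f(gcd(n,r)) = f(n)` for all `n ≥ 1`. -/
def IsREven (r : ℕ) (f : ℕ → ℂ) : Prop :=
  ∀ n : ℕ, 1 ≤ n → f (Nat.gcd n r) = f n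

/-- `f' = μ * f`, the Dirichlet convolution of the Möbius function with `f`. -/
noncomputable def moeConv (f : ℕ → ℂ) (n : ℕ) : ℂ :=
  ∑ d ∈ n.divisors, ((ArithmeticFunction.moebius d : ℤ) : ℂ) * f (n / d)

/-- `g` is multiplicative: `g(1) = 1` and `g(mn) = g(m)g(n)` whenever `gcd(m,n) = 1`. -/
def IsMult (g : ℕ → ℂ) : Prop :=
  g 1 = 1 ∧ ∀ m n : ℕ, 1 ≤ m → 1 ≤ n → Nat.Coprime m n → g (m * n) = g m * g n

lemma moebius_sum' (m : ℕ) :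
    (∑ d ∈ m.divisors, (ArithmeticFunction.moebius d : ℤ)) = if m = 1 then 1 else 0 := by
  have := congrArg (fun g => g m) ArithmeticFunction.moebius_mul_coe_zeta
  simp only [ArithmeticFunction.coe_mul_zeta_apply, ArithmeticFunction.one_apply] at this
  exact this

lemma geom_exp' (s n : ℕ) (hs : 1 ≤ s) :
    ∑ j ∈ Icc 1 s, Complex.exp (2 * (Real.pi:ℂ) * Complex.I * j * n / s)
      = if s ∣ n then (s:ℂ) else 0 := by
  have hs0 : (s:ℂ) ≠ 0 := Nat.cast_ne_zero.mpr (by omega)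
  set ζ : ℂ := Complex.exp (2 * (Real.pi:ℂ) * Complex.I * n / s) with hζ
  have hterm : ∀ j : ℕ, Complex.exp (2 * (Real.pi:ℂ) * Complex.I * j * n / s) = ζ ^ j := by
    intro j
    rw [hζ, ← Complex.exp_nat_mul]
    ring_nf
  have hζs : ζ ^ s = 1 := by
    rw [hζ, ← Complex.exp_nat_mul]
    have : (s:ℂ) * (2 * (Real.pi:ℂ) * Complex.I * n / s) = n * (2 * (Real.pi:ℂ) * Complex.I) := by
      field_simp
    rw [this, Complex.exp_nat_mul_two_pi_mul_I]
  simp only [hterm]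
  by_cases hdvd : s ∣ n
  · have hζ1 : ζ = 1 := by
      obtain ⟨c, rfl⟩ := hdvd
      rw [hζ]
      have : 2 * (Real.pi:ℂ) * Complex.I * (↑(s*c)) / s = (c:ℂ) * (2 * (Real.pi:ℂ) * Complex.I) := by
        push_cast; field_simp
      rw [this, Complex.exp_nat_mul_two_pi_mul_I]
    simp [hζ1, Nat.card_Icc, if_pos hdvd]
  · have h2 : (2 * (Real.pi:ℂ) * Complex.I) ≠ 0 := by
      simp [Real.pi_ne_zero, Complex.I_ne_zero, Complex.ofReal_ne_zero]
    have hζ1 : ζ ≠ 1 := by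
      intro h
      rw [hζ, Complex.exp_eq_one_iff] at h
      obtain ⟨m, hm⟩ := h
      field_simp at hm
      have hns : (n:ℂ) = (m:ℂ) * s :=
        mul_left_cancel₀ h2 (by linear_combination (2 * (Real.pi:ℂ) * Complex.I) * hm)
      have hz : (n:ℤ) = m * s := by exact_mod_cast hns
      exact hdvd (Int.natCast_dvd_natCast.mp ⟨m, by rw [hz]; ring⟩)
    rw [← Finset.Ico_add_one_right_eq_Icc, Finset.sum_Ico_eq_sum_range]
    have : ∀ i ∈ range (s + 1 - 1), ζ ^ (1 + i) = ζ * ζ ^ i := by intro i _; ring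
    rw [Finset.sum_congr rfl this, ← Finset.mul_sum]
    simp only [Nat.add_sub_cancel]
    rw [geom_sum_eq hζ1, hζs]
    simp [hdvd]

lemma subsum' (q d n : ℕ) (hq : 1 ≤ q) (hd : d ∣ q) (hd1 : 1 ≤ d) :
    ∑ k ∈ (Icc 1 q).filter (fun k => d ∣ k),
        Complex.exp (2 * (Real.pi:ℂ) * Complex.I * k * n / q)
      = ∑ j ∈ Icc 1 (q/d),
        Complex.exp (2 * (Real.pi:ℂ) * Complex.I * j * n / ((q/d : ℕ) : ℂ)) := by
  have hd0 : (d:ℂ) ≠ 0 := Nat.cast_ne_zero.mpr (by omega)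
  have hqd1 : 1 ≤ q / d := Nat.one_le_div_iff (by omega) |>.mpr (Nat.le_of_dvd (by omega) hd)
  have hqd0 : ((q/d : ℕ):ℂ) ≠ 0 := Nat.cast_ne_zero.mpr (by omega)
  refine Finset.sum_nbij' (fun k => k / d) (fun j => d * j) ?_ ?_ ?_ ?_ ?_
  · intro k hk
    simp only [mem_filter, mem_Icc] at hk
    obtain ⟨⟨hk1, hkq⟩, hdk⟩ := hk
    simp only [mem_Icc]
    exact ⟨(Nat.one_le_div_iff (by omega)).mpr (Nat.le_of_dvd (by omega) hdk),
      Nat.div_le_div_right hkq⟩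
  · intro j hj
    simp only [mem_Icc] at hj
    simp only [mem_filter, mem_Icc]
    refine ⟨⟨Nat.one_le_iff_ne_zero.mpr (Nat.mul_ne_zero (by omega) (by omega)), ?_⟩, Dvd.intro j rfl⟩
    calc d * j ≤ d * (q / d) := Nat.mul_le_mul_left d hj.2
      _ = q := Nat.mul_div_cancel' hd
  · intro k hk
    simp only [mem_filter] at hk
    exact Nat.mul_div_cancel' hk.2
  · intro j _
    exact Nat.mul_div_cancel_left j (by omega)
  · intro k hk
    simp only [mem_filter, mem_Icc] at hk
    obtain ⟨⟨hk1, hkq⟩, c, rfl⟩ := hk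
    congr 1
    have h1 : ((d * c : ℕ):ℂ) = (d:ℂ) * c := by push_cast; ring
    have h2 : ((d * c / d : ℕ):ℂ) = (c:ℂ) := by rw [Nat.mul_div_cancel_left c (by omega)]
    have h3 : (q:ℂ) = (d:ℂ) * ((q/d : ℕ):ℂ) := by
      rw [← Nat.cast_mul, Nat.mul_div_cancel' hd]
    rw [h1, h2, h3]
    field_simp

lemma ram_eq' (q n : ℕ) (hq : 1 ≤ q) :
    ram q n = ∑ d ∈ q.divisors, ((ArithmeticFunction.moebius (q/d) : ℤ):ℂ) *
      (if d ∣ n then (d:ℂ) else 0) := by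
  set E : ℕ → ℂ := fun k => Complex.exp (2 * (Real.pi:ℂ) * Complex.I * k * n / q) with hE
  have step1 : ram q n = ∑ k ∈ Icc 1 q, ∑ d ∈ q.divisors,
      (if d ∣ k then ((ArithmeticFunction.moebius d : ℤ):ℂ) * E k else 0) := by
    rw [ram, Finset.sum_filter]
    refine Finset.sum_congr rfl (fun k hk => ?_)
    simp only [mem_Icc] at hk
    have hdivset : (Nat.gcd k q).divisors = q.divisors.filter (fun d => d ∣ k) := by
      ext d
      simp only [Nat.mem_divisors, mem_filter]
      constructor
      · rintro ⟨hd, -⟩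
        exact ⟨⟨hd.trans (Nat.gcd_dvd_right k q), by omega⟩, hd.trans (Nat.gcd_dvd_left k q)⟩
      · rintro ⟨⟨hdq, -⟩, hdk⟩
        exact ⟨Nat.dvd_gcd hdk hdq, Nat.gcd_ne_zero_left (by omega)⟩
    have h1 : (if Nat.gcd k q = 1 then (1:ℂ) else 0)
        = ∑ d ∈ (Nat.gcd k q).divisors, ((ArithmeticFunction.moebius d : ℤ):ℂ) := by
      have hm := moebius_sum' (Nat.gcd k q)
      calc (if Nat.gcd k q = 1 then (1:ℂ) else 0)
          = ((if Nat.gcd k q = 1 then (1:ℤ) else 0 : ℤ):ℂ) := by split <;> simp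
        _ = ((∑ d ∈ (Nat.gcd k q).divisors, (ArithmeticFunction.moebius d : ℤ) : ℤ):ℂ) := by
            rw [hm]
        _ = ∑ d ∈ (Nat.gcd k q).divisors, ((ArithmeticFunction.moebius d : ℤ):ℂ) := by
            push_cast; rfl
    calc (if Nat.gcd k q = 1 then E k else 0)
        = (if Nat.gcd k q = 1 then (1:ℂ) else 0) * E k := by
          by_cases h : Nat.gcd k q = 1 <;> simp [h]
      _ = (∑ d ∈ (Nat.gcd k q).divisors, ((ArithmeticFunction.moebius d : ℤ):ℂ)) * E k := by
          rw [h1]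
      _ = ∑ d ∈ q.divisors, (if d ∣ k then ((ArithmeticFunction.moebius d : ℤ):ℂ) * E k else 0) := by
          rw [hdivset, Finset.sum_filter, Finset.sum_mul]
          refine Finset.sum_congr rfl (fun d _ => ?_)
          by_cases h : d ∣ k <;> simp [h]
  rw [step1, Finset.sum_comm]
  have step2 : ∀ d ∈ q.divisors,
      (∑ k ∈ Icc 1 q, if d ∣ k then ((ArithmeticFunction.moebius d : ℤ):ℂ) * E k else 0)
        = ((ArithmeticFunction.moebius d : ℤ):ℂ) * (if (q/d) ∣ n then ((q/d:ℕ):ℂ) else 0) := by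
    intro d hd
    rw [Nat.mem_divisors] at hd
    have hd1 : 1 ≤ d := Nat.pos_of_dvd_of_pos hd.1 (by omega)
    rw [← Finset.sum_filter, ← Finset.mul_sum, hE]
    rw [subsum' q d n hq hd.1 hd1, geom_exp' (q/d) n
      ((Nat.one_le_div_iff (by omega)).mpr (Nat.le_of_dvd (by omega) hd.1))]
  rw [Finset.sum_congr rfl step2]
  rw [← Nat.sum_div_divisors q (fun d => ((ArithmeticFunction.moebius (q/d) : ℤ):ℂ) *
      (if d ∣ n then (d:ℂ) else 0))]
  refine Finset.sum_congr rfl (fun d hd => ?_)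
  rw [Nat.mem_divisors] at hd
  rw [Nat.div_div_self hd.1 hd.2]

lemma ram_gcd' (q r n : ℕ) (hr : 1 ≤ r) (hq : q ∣ r) :
    ram q (Nat.gcd n r) = ram q n := by
  have hq1 : 1 ≤ q := Nat.pos_of_dvd_of_pos hq (by omega)
  rw [ram_eq' q _ hq1, ram_eq' q n hq1]
  refine Finset.sum_congr rfl (fun d hd => ?_)
  rw [Nat.mem_divisors] at hd
  have hiff : (d ∣ Nat.gcd n r) ↔ d ∣ n :=
    ⟨fun h => h.trans (Nat.gcd_dvd_left n r), fun h => Nat.dvd_gcd h (hd.1.trans hq)⟩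
  simp only [hiff]

lemma gcd_sub' (r k : ℕ) (hk1 : 1 ≤ k) (hkr : k ≤ r) : Nat.gcd (r - k) r = Nat.gcd k r := by
  have hsub : r - (r - k) = k := by omega
  have h1 : Nat.gcd (r - k) r ∣ k := by
    have := Nat.dvd_sub (Nat.gcd_dvd_right (r-k) r) (Nat.gcd_dvd_left (r-k) r)
    rwa [hsub] at this
  have h2 : Nat.gcd k r ∣ r - k := Nat.dvd_sub (Nat.gcd_dvd_right k r) (Nat.gcd_dvd_left k r)
  exact Nat.dvd_antisymm (Nat.dvd_gcd h1 (Nat.gcd_dvd_right _ _))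
    (Nat.dvd_gcd h2 (Nat.gcd_dvd_right _ _))

lemma dft_flip' (r : ℕ) (hr : 1 ≤ r) (f : ℕ → ℂ) (hf : IsREven r f) (n : ℕ) :
    dft r f n = ∑ k ∈ Icc 1 r, f k * Complex.exp (2 * (Real.pi:ℂ) * Complex.I * k * n / r) := by
  have hr0 : (r:ℂ) ≠ 0 := Nat.cast_ne_zero.mpr (by omega)
  rw [dft]
  refine Finset.sum_nbij' (fun k => if k = r then r else r - k)
    (fun k => if k = r then r else r - k) ?_ ?_ ?_ ?_ ?_
  · intro k hk
    simp only [mem_Icc] at hk ⊢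
    split <;> omega
  · intro k hk
    simp only [mem_Icc] at hk ⊢
    split <;> omega
  · intro k hk
    simp only [mem_Icc] at hk
    by_cases h : k = r
    · simp [h]
    · have : ¬ (r - k = r) := by omega
      simp [h, this]
      omega
  · intro k hk
    simp only [mem_Icc] at hk
    by_cases h : k = r
    · simp [h]
    · have : ¬ (r - k = r) := by omega
      simp [h, this]
      omega
  · intro k hk
    simp only [mem_Icc] at hk
    by_cases h : k = r
    · rw [if_pos h, h]
      congr 1
      have h1 : -(2 * (Real.pi:ℂ) * Complex.I * r * n / r) = ((-(n:ℤ) : ℤ) : ℂ) * (2 * (Real.pi:ℂ) * Complex.I) := by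
        push_cast
        field_simp
      have h2 : 2 * (Real.pi:ℂ) * Complex.I * r * n / r = (((n:ℤ) : ℤ) : ℂ) * (2 * (Real.pi:ℂ) * Complex.I) := by
        push_cast
        field_simp
      rw [h1, h2, Complex.exp_int_mul_two_pi_mul_I, Complex.exp_int_mul_two_pi_mul_I]
    · rw [if_neg h]
      have hfk : f (r - k) = f k := by
        rw [← hf (r - k) (by omega), ← hf k (by omega), gcd_sub' r k hk.1 (by omega)]
      rw [hfk]
      congr 1
      have hcast : ((r - k : ℕ):ℂ) = (r:ℂ) - k := by
        push_cast [Nat.cast_sub (by omega : k ≤ r)]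
        ring
      rw [hcast]
      rw [show 2 * (Real.pi:ℂ) * Complex.I * ((r:ℂ) - k) * n / r
          = (n:ℤ) * (2 * (Real.pi:ℂ) * Complex.I) + -(2 * (Real.pi:ℂ) * Complex.I * k * n / r) by
        push_cast; field_simp; ring]
      rw [Complex.exp_add, Complex.exp_int_mul_two_pi_mul_I, one_mul]

lemma fiber_sum' (r d n : ℕ) (hr : 1 ≤ r) (hd : d ∣ r) (hd1 : 1 ≤ d) :
    ∑ k ∈ (Icc 1 r).filter (fun k => Nat.gcd k r = d),
        Complex.exp (2 * (Real.pi:ℂ) * Complex.I * k * n / r)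
      = ram (r/d) n := by
  have hd0 : (d:ℂ) ≠ 0 := Nat.cast_ne_zero.mpr (by omega)
  have hrd1 : 1 ≤ r / d := Nat.one_le_div_iff (by omega) |>.mpr (Nat.le_of_dvd (by omega) hd)
  rw [ram]
  refine Finset.sum_nbij' (fun k => k / d) (fun m => d * m) ?_ ?_ ?_ ?_ ?_
  · intro k hk
    simp only [mem_filter, mem_Icc] at hk ⊢
    obtain ⟨⟨hk1, hkr⟩, hg⟩ := hk
    have hdk : d ∣ k := hg ▸ Nat.gcd_dvd_left k r
    refine ⟨⟨(Nat.one_le_div_iff (by omega)).mpr (Nat.le_of_dvd (by omega) hdk),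
      Nat.div_le_div_right hkr⟩, ?_⟩
    have := Nat.coprime_div_gcd_div_gcd (m := k) (n := r) (by rw [hg]; omega)
    rwa [hg] at this
  · intro m hm
    simp only [mem_filter, mem_Icc] at hm ⊢
    obtain ⟨⟨hm1, hmr⟩, hg⟩ := hm
    refine ⟨⟨Nat.one_le_iff_ne_zero.mpr (by positivity), ?_⟩, ?_⟩
    · calc d * m ≤ d * (r / d) := Nat.mul_le_mul_left d hmr
        _ = r := Nat.mul_div_cancel' hd
    · rw [← Nat.mul_div_cancel' hd, Nat.gcd_mul_left, hg, mul_one]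
  · intro k hk
    simp only [mem_filter, mem_Icc] at hk
    have hdk : d ∣ k := hk.2 ▸ Nat.gcd_dvd_left k r
    exact Nat.mul_div_cancel' hdk
  · intro m _
    exact Nat.mul_div_cancel_left m (by omega)
  · intro k hk
    simp only [mem_filter, mem_Icc] at hk
    have hdk : d ∣ k := hk.2 ▸ Nat.gcd_dvd_left k r
    obtain ⟨c, rfl⟩ := hdk
    congr 1
    have h2 : ((d * c / d : ℕ):ℂ) = (c:ℂ) := by rw [Nat.mul_div_cancel_left c (by omega)]
    have h3 : (r:ℂ) = (d:ℂ) * ((r/d : ℕ):ℂ) := by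
      rw [← Nat.cast_mul, Nat.mul_div_cancel' hd]
    have h1 : ((d * c : ℕ):ℂ) = (d:ℂ) * c := by push_cast; ring
    have hrd0 : ((r/d : ℕ):ℂ) ≠ 0 := Nat.cast_ne_zero.mpr (by omega)
    rw [h1, h2, h3]
    field_simp

/-- If `f` is `r`-even then `f̂` is `r`-even and `f̂(n) = Σ_{d|r} f(d) c_{r/d}(n)`. -/
theorem dft_stmt_2 (r : ℕ) (hr : 1 ≤ r) (f : ℕ → ℂ) (hf : IsREven r f) :
    IsREven r (dft r f) ∧
    ∀ n : ℕ, 1 ≤ n → dft r f n = ∑ d ∈ r.divisors, f d * ram (r / d) n := by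
  have formula : ∀ n : ℕ, dft r f n = ∑ d ∈ r.divisors, f d * ram (r / d) n := by
    intro n
    rw [dft_flip' r hr f hf n]
    have hmap : ∀ k ∈ Icc 1 r, Nat.gcd k r ∈ r.divisors := fun k _ =>
      Nat.mem_divisors.mpr ⟨Nat.gcd_dvd_right k r, by omega⟩
    rw [← Finset.sum_fiberwise_of_maps_to hmap]
    refine Finset.sum_congr rfl (fun d hd => ?_)
    rw [Nat.mem_divisors] at hd
    have hd1 : 1 ≤ d := Nat.pos_of_dvd_of_pos hd.1 (by omega)
    rw [← fiber_sum' r d n hr hd.1 hd1, Finset.mul_sum]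
    refine Finset.sum_congr rfl (fun k hk => ?_)
    simp only [mem_filter, mem_Icc] at hk
    have hfd : f d = f k := by
      rw [← hk.2]
      exact hf k (by omega)
    rw [hfd]
  refine ⟨?_, fun n _ => formula n⟩
  intro n _
  rw [formula, formula]
  refine Finset.sum_congr rfl (fun d hd => ?_)
  rw [Nat.mem_divisors] at hd
  rw [ram_gcd' (r/d) r n hr (Nat.div_dvd_of_dvd hd.1)]
end

section
/- Let r ≥ 1 and let f and h be r-even arithmetic functions. Then their Cauchy convolution f⊗h is again r-even, and its Fourier coefficients satisfy α_{f⊗h}(d) = r · α_f(d) · α_h(d) for every d | r, where for an r-even function g the Fourier coefficient is α_g(d) = (1/r) ĝ(r/d). -/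
open Finset

noncomputable def cauchy (r : ℕ) (f h : ℕ → ℂ) (n : ℕ) : ℂ :=
  ∑ a ∈ Finset.Icc 1 r, f a * h ((((n : ℤ) - (a : ℤ)) % (r : ℤ)).toNat + r)

section aux
variable (r : ℕ)

/-- representative of `z` in `Icc 1 r`. -/
def rep1 (z : ℤ) : ℕ := ((z - 1) % r).toNat + 1

variable {r}

lemma emod_self_modeq (hr : 1 ≤ r) (a : ℤ) : a % r ≡ a [ZMOD r] :=
  Int.emod_emod_of_dvd a dvd_rfl

lemma rep1_mem (hr : 1 ≤ r) (z : ℤ) : rep1 r z ∈ Finset.Icc 1 r := by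
  have h0 : (0:ℤ) < r := by exact_mod_cast hr
  have h1 := Int.emod_lt_of_pos (z - 1) h0
  have h2 := Int.emod_nonneg (z - 1) h0.ne'
  simp only [rep1, Finset.mem_Icc]
  omega

lemma rep1_modeq (hr : 1 ≤ r) (z : ℤ) : (rep1 r z : ℤ) ≡ z [ZMOD r] := by
  have h0 : (0:ℤ) < r := by exact_mod_cast hr
  have h1 := Int.emod_nonneg (z - 1) h0.ne'
  have he : ((rep1 r z : ℤ)) = (z - 1) % r + 1 := by
    simp only [rep1]; push_cast [Int.toNat_of_nonneg h1]; ring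
  rw [he]
  have := (emod_self_modeq hr (z - 1)).add_right 1
  simpa using this

/-- the representative used in `cauchy`. -/
lemma rep2_modeq (hr : 1 ≤ r) (z : ℤ) : (((z % r).toNat + r : ℕ) : ℤ) ≡ z [ZMOD r] := by
  have h0 : (0:ℤ) < r := by exact_mod_cast hr
  have h1 := Int.emod_nonneg z h0.ne'
  have he : ((((z % r).toNat + r : ℕ)) : ℤ) = z % r + r := by
    push_cast [Int.toNat_of_nonneg h1]; ring
  rw [he]
  have hr0 : (r:ℤ) ≡ 0 [ZMOD r] := Int.modEq_zero_iff_dvd.mpr dvd_rfl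
  calc z % r + r ≡ z + 0 [ZMOD r] := (emod_self_modeq hr z).add hr0
    _ = z := by ring

lemma rep2_pos (hr : 1 ≤ r) (z : ℤ) : 1 ≤ (z % r).toNat + r := by omega

lemma gcd_mod_left (hr : 1 ≤ r) (a : ℕ) : Nat.gcd a r = Nat.gcd (a % r) r := by
  rw [Nat.gcd_comm, Nat.gcd_rec]

/-- an `r`-even function takes equal values on positive integers congruent mod `r`,
up to multiplication by a number coprime to `r`. -/
lemma even_congr {f : ℕ → ℂ} (hf : IsREven r f) (hr : 1 ≤ r) {u x y : ℕ}
    (hu : Nat.Coprime u r) (hx : 1 ≤ x) (hy : 1 ≤ y)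
    (hxy : (x : ℤ) ≡ u * y [ZMOD r]) : f x = f y := by
  have h2 : ((x:ℤ)) % r = ((u * y : ℕ) : ℤ) % r := by push_cast; exact hxy
  have hmod : x % r = (u * y) % r := by omega
  have hg : Nat.gcd x r = Nat.gcd y r := by
    rw [gcd_mod_left hr x, hmod, ← gcd_mod_left hr (u*y),
      Nat.Coprime.gcd_mul_left_cancel y hu]
  rw [← hf x hx, ← hf y hy, hg]

end aux

section zeta
variable {r : ℕ}

noncomputable def zet (r : ℕ) : ℂ := Complex.exp (2 * (Real.pi : ℂ) * Complex.I / r)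

lemma zet_ne_zero (r : ℕ) : zet r ≠ 0 := Complex.exp_ne_zero _

lemma zet_pow_r (hr : 1 ≤ r) : zet r ^ (r : ℤ) = 1 := by
  have h0 : (r : ℂ) ≠ 0 := Nat.cast_ne_zero.mpr (by omega)
  rw [zet, ← Complex.exp_int_mul]
  have h : ((r : ℤ) : ℂ) * (2 * (Real.pi : ℂ) * Complex.I / r) = 2 * Real.pi * Complex.I := by
    push_cast; field_simp
  rw [h, Complex.exp_two_pi_mul_I]

lemma zet_congr (hr : 1 ≤ r) {a b : ℤ} (hab : a ≡ b [ZMOD r]) : zet r ^ a = zet r ^ b := by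
  obtain ⟨t, ht⟩ := Int.ModEq.dvd hab
  have hb : b = a + r * t := by omega
  rw [hb, zpow_add₀ (zet_ne_zero r), zpow_mul, zet_pow_r hr, one_zpow, mul_one]

lemma exp_eq_zet (hr : 1 ≤ r) (k n : ℕ) :
    Complex.exp (-(2 * (Real.pi : ℂ) * Complex.I * (k : ℂ) * (n : ℂ) / (r : ℂ))) =
      zet r ^ (-((k : ℤ) * (n : ℤ))) := by
  have h0 : (r : ℂ) ≠ 0 := Nat.cast_ne_zero.mpr (by omega)
  rw [zet, ← Complex.exp_int_mul]
  have h : ((-((k : ℤ) * (n : ℤ)) : ℤ) : ℂ) * (2 * (Real.pi : ℂ) * Complex.I / r) =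
      -(2 * (Real.pi : ℂ) * Complex.I * (k : ℂ) * (n : ℂ) / (r : ℂ)) := by
    push_cast; ring
  rw [h]

lemma mem_Icc_eq_of_modeq (hr : 1 ≤ r) {x y : ℕ} (hx : x ∈ Finset.Icc 1 r)
    (hy : y ∈ Finset.Icc 1 r) (hxy : (x : ℤ) ≡ y [ZMOD r]) : x = y := by
  simp only [Finset.mem_Icc] at hx hy
  obtain ⟨t, ht⟩ := Int.ModEq.dvd hxy
  have h1 : (y : ℤ) - x = r * t := ht
  have hb : -(r:ℤ) < (y:ℤ) - x ∧ (y:ℤ) - x < r := by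
    constructor <;> push_cast <;> omega
  rcases lt_trichotomy t 0 with h | h | h
  · exfalso; nlinarith [h1, hb.1, (by exact_mod_cast hr : (1:ℤ) ≤ r)]
  · rw [h, mul_zero] at h1
    omega
  · exfalso; nlinarith [h1, hb.2, (by exact_mod_cast hr : (1:ℤ) ≤ r)]

end zeta

section main
variable {r : ℕ}

lemma dft_cauchy_mul (hr : 1 ≤ r) {f h : ℕ → ℂ} (hf : IsREven r f) (hh : IsREven r h)
    (m : ℕ) : dft r (cauchy r f h) m = dft r f m * dft r h m := by
  unfold dft cauchy
  simp only [exp_eq_zet hr]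
  rw [Finset.sum_mul_sum]
  simp only [Finset.sum_mul]
  rw [Finset.sum_comm]
  refine Finset.sum_congr rfl (fun a ha => ?_)
  simp only [Finset.mem_Icc] at ha
  refine Finset.sum_nbij' (fun k => rep1 r ((k : ℤ) - (a : ℤ)))
    (fun b => rep1 r ((b : ℤ) + (a : ℤ)))
    (fun k _ => rep1_mem hr _) (fun b _ => rep1_mem hr _) ?_ ?_ ?_
  · intro k hk
    refine mem_Icc_eq_of_modeq hr (rep1_mem hr _) hk ?_
    calc ((rep1 r ((rep1 r ((k : ℤ) - a) : ℤ) + a) : ℕ) : ℤ)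
        ≡ (rep1 r ((k : ℤ) - a) : ℤ) + a [ZMOD r] := rep1_modeq hr _
      _ ≡ ((k : ℤ) - a) + a [ZMOD r] := (rep1_modeq hr _).add_right a
      _ = (k : ℤ) := by ring
  · intro b hb
    refine mem_Icc_eq_of_modeq hr (rep1_mem hr _) hb ?_
    calc ((rep1 r ((rep1 r ((b : ℤ) + a) : ℤ) - a) : ℕ) : ℤ)
        ≡ (rep1 r ((b : ℤ) + a) : ℤ) - a [ZMOD r] := rep1_modeq hr _
      _ ≡ ((b : ℤ) + a) - a [ZMOD r] := (rep1_modeq hr _).sub_right a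
      _ = (b : ℤ) := by ring
  · intro k hk
    simp only [Finset.mem_Icc] at hk
    set b := rep1 r ((k : ℤ) - a) with hbdef
    have hbmem := rep1_mem hr ((k : ℤ) - (a : ℤ))
    simp only [Finset.mem_Icc] at hbmem
    -- h value equality
    have h1 : h ((((k : ℤ) - (a : ℤ)) % (r : ℤ)).toNat + r) = h b := by
      refine even_congr hh hr (Nat.coprime_one_left r) (rep2_pos hr _) (by omega) ?_
      have c1 := rep2_modeq hr ((k : ℤ) - (a : ℤ))
      have c2 := (rep1_modeq hr ((k : ℤ) - (a : ℤ))).symm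
      calc (((((k : ℤ) - (a : ℤ)) % (r : ℤ)).toNat + r : ℕ) : ℤ)
          ≡ (k : ℤ) - a [ZMOD r] := c1
        _ ≡ (b : ℤ) [ZMOD r] := c2
        _ = (1 : ℕ) * (b : ℤ) := by push_cast; ring
    -- zeta equality
    have h2 : zet r ^ (-((k : ℤ) * (m : ℤ))) =
        zet r ^ (-((a : ℤ) * m)) * zet r ^ (-((b : ℤ) * m)) := by
      rw [← zpow_add₀ (zet_ne_zero r)]
      refine zet_congr hr ?_
      have c2 : ((a : ℤ) + b) ≡ (a : ℤ) + ((k : ℤ) - a) [ZMOD r] :=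
        (rep1_modeq hr _).add_left a
      have c3 : ((k : ℤ)) ≡ (a : ℤ) + b [ZMOD r] := by
        have : (a : ℤ) + ((k : ℤ) - a) = (k : ℤ) := by ring
        exact (this ▸ c2).symm
      calc -((k : ℤ) * m) ≡ -(((a : ℤ) + b) * m) [ZMOD r] := ((c3.mul_right m).neg)
        _ = -((a : ℤ) * m) + -((b : ℤ) * m) := by ring
    rw [h1, h2]
    ring

end main

section unitpart
variable {r : ℕ}

lemma exists_unit (hr : 1 ≤ r) {n : ℕ} (hn : 1 ≤ n) :
    ∃ u v : ℕ, Nat.Coprime u r ∧ Nat.Coprime v r ∧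
      ((u : ℤ) * v) ≡ 1 [ZMOD r] ∧ ((u : ℤ) * (Nat.gcd n r : ℤ)) ≡ (n : ℤ) [ZMOD r] := by
  haveI : NeZero r := ⟨by omega⟩
  set g := Nat.gcd n r with hgdef
  have hg : g ∣ r := Nat.gcd_dvd_right n r
  have hgn : g ∣ n := Nat.gcd_dvd_left n r
  have hgpos : 0 < g := Nat.gcd_pos_of_pos_left r hn
  have hcop : Nat.Coprime (n / g) (r / g) := Nat.coprime_div_gcd_div_gcd hgpos
  have hdvd : r / g ∣ r := Nat.div_dvd_of_dvd hg
  obtain ⟨w, hw⟩ := ZMod.unitsMap_surjective hdvd (ZMod.unitOfCoprime (n / g) hcop)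
  refine ⟨((w : ZMod r)).val, (((w⁻¹ : (ZMod r)ˣ) : ZMod r)).val,
    ZMod.val_coe_unit_coprime w, ZMod.val_coe_unit_coprime w⁻¹, ?_, ?_⟩
  · rw [← ZMod.intCast_eq_intCast_iff]
    push_cast
    rw [ZMod.natCast_val, ZMod.natCast_val, ZMod.cast_id, ZMod.cast_id]
    exact_mod_cast w.mul_inv
  · -- congruence u ≡ n/g mod r/g
    have hcast : (((w : ZMod r)).val : ZMod (r / g)) = ((n / g : ℕ) : ZMod (r / g)) := by
      have h1 : (((w : ZMod r)).val : ZMod r) = (w : ZMod r) := by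
        rw [ZMod.natCast_val, ZMod.cast_id]
      have h2 : (ZMod.castHom hdvd (ZMod (r / g))) ((((w : ZMod r)).val : ℕ) : ZMod r)
          = ((((w : ZMod r)).val : ℕ) : ZMod (r / g)) := map_natCast _ _
      have h3 : (ZMod.castHom hdvd (ZMod (r / g))) ((w : ZMod r))
          = ((ZMod.unitsMap hdvd w : ZMod (r / g))) := rfl
      rw [← h2, h1, h3, hw, ZMod.coe_unitOfCoprime]
    have hmod : ((w : ZMod r)).val ≡ n / g [MOD r / g] :=
      (ZMod.natCast_eq_natCast_iff _ _ _).mp hcast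
    set u := ((w : ZMod r)).val
    have hdvdZ : ((r / g : ℕ) : ℤ) ∣ (u : ℤ) - (n / g : ℕ) :=
      Int.ModEq.dvd (Int.natCast_modEq_iff.mpr hmod.symm)
    obtain ⟨t, ht⟩ := hdvdZ
    have hrg : ((r / g : ℕ) : ℤ) * (g : ℤ) = (r : ℤ) := by
      exact_mod_cast congrArg (Nat.cast : ℕ → ℤ) (Nat.div_mul_cancel hg)
    have hng : ((n / g : ℕ) : ℤ) * (g : ℤ) = (n : ℤ) := by
      exact_mod_cast congrArg (Nat.cast : ℕ → ℤ) (Nat.div_mul_cancel hgn)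
    have : (u : ℤ) * g - n = (r : ℤ) * t := by
      calc (u : ℤ) * g - n = ((u : ℤ) - (n / g : ℕ)) * g := by rw [← hng]; ring
        _ = ((r / g : ℕ) : ℤ) * t * g := by rw [ht]
        _ = (r : ℤ) * t := by rw [← hrg]; ring
    exact (Int.modEq_iff_dvd.mpr ⟨t, this⟩).symm

lemma cauchy_even (hr : 1 ≤ r) {f h : ℕ → ℂ} (hf : IsREven r f) (hh : IsREven r h) :
    IsREven r (cauchy r f h) := by
  intro n hn
  obtain ⟨u, v, hu, hv, huv, hug⟩ := exists_unit hr hn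
  set gd := Nat.gcd n r with hgdef
  unfold cauchy
  refine Finset.sum_nbij' (fun b => rep1 r ((u : ℤ) * b)) (fun a => rep1 r ((v : ℤ) * a))
    (fun b _ => rep1_mem hr _) (fun a _ => rep1_mem hr _) ?_ ?_ ?_
  · intro b hb
    refine mem_Icc_eq_of_modeq hr (rep1_mem hr _) hb ?_
    calc ((rep1 r ((v : ℤ) * (rep1 r ((u : ℤ) * b) : ℕ)) : ℕ) : ℤ)
        ≡ (v : ℤ) * (rep1 r ((u : ℤ) * b) : ℕ) [ZMOD r] := rep1_modeq hr _
      _ ≡ (v : ℤ) * ((u : ℤ) * b) [ZMOD r] := (rep1_modeq hr _).mul_left v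
      _ = ((u : ℤ) * v) * b := by ring
      _ ≡ 1 * b [ZMOD r] := huv.mul_right b
      _ = (b : ℤ) := by ring
  · intro a ha
    refine mem_Icc_eq_of_modeq hr (rep1_mem hr _) ha ?_
    calc ((rep1 r ((u : ℤ) * (rep1 r ((v : ℤ) * a) : ℕ)) : ℕ) : ℤ)
        ≡ (u : ℤ) * (rep1 r ((v : ℤ) * a) : ℕ) [ZMOD r] := rep1_modeq hr _
      _ ≡ (u : ℤ) * ((v : ℤ) * a) [ZMOD r] := (rep1_modeq hr _).mul_left u
      _ = ((u : ℤ) * v) * a := by ring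
      _ ≡ 1 * a [ZMOD r] := huv.mul_right a
      _ = (a : ℤ) := by ring
  · intro b hb
    simp only [Finset.mem_Icc] at hb
    set a := rep1 r ((u : ℤ) * b) with hadef
    have hamem := rep1_mem hr ((u : ℤ) * b)
    simp only [Finset.mem_Icc] at hamem
    have h1 : f b = f a := by
      refine (even_congr hf hr hu (by omega) (by omega) ?_).symm
      calc ((a : ℕ) : ℤ) ≡ (u : ℤ) * b [ZMOD r] := rep1_modeq hr _
        _ = ((u : ℕ) : ℤ) * b := by push_cast; ring
    have h2 : h ((((gd : ℤ) - (b : ℤ)) % (r : ℤ)).toNat + r) =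
        h ((((n : ℤ) - (a : ℤ)) % (r : ℤ)).toNat + r) := by
      refine (even_congr hh hr hu (rep2_pos hr _) (rep2_pos hr _) ?_).symm
      calc (((((n : ℤ) - (a : ℤ)) % (r : ℤ)).toNat + r : ℕ) : ℤ)
          ≡ (n : ℤ) - a [ZMOD r] := rep2_modeq hr _
        _ ≡ ((u : ℤ) * gd) - ((u : ℤ) * b) [ZMOD r] := Int.ModEq.sub hug.symm (rep1_modeq hr _)
        _ = (u : ℤ) * ((gd : ℤ) - b) := by ring
        _ ≡ (u : ℤ) * (((((gd : ℤ) - (b : ℤ)) % (r : ℤ)).toNat + r : ℕ) : ℤ) [ZMOD r] :=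
            ((rep2_modeq hr ((gd : ℤ) - b)).symm).mul_left u
    rw [h1, h2]
end unitpart

/-- If `f, h` are `r`-even then `f⊗h` is `r`-even and `α_{f⊗h}(d) = r·α_f(d)·α_h(d)` for `d | r`,
where `α_g(d) = (1/r) ĝ(r/d)`. -/
theorem dft_stmt_8 (r : ℕ) (hr : 1 ≤ r) (f h : ℕ → ℂ) (hf : IsREven r f) (hh : IsREven r h) :
    IsREven r (cauchy r f h) ∧
    ∀ d ∈ r.divisors,
      (1 / (r : ℂ)) * dft r (cauchy r f h) (r / d) =
        (r : ℂ) * ((1 / (r : ℂ)) * dft r f (r / d)) * ((1 / (r : ℂ)) * dft r h (r / d)) := by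
  refine ⟨cauchy_even hr hf hh, fun d _ => ?_⟩
  have hr0 : (r : ℂ) ≠ 0 := Nat.cast_ne_zero.mpr (by omega)
  rw [dft_cauchy_mul hr hf hh]
  field_simp
end
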